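/- arXiv:2310.12734 — 6 statements merged into one kernel-verified Lean document; each statement's English description precedes it below -/
import Mathlib

section
/- Let A and B be complex polynomials with deg A = N ≥ 1, deg B = K ≥ 1, ‖A‖ ≤ 1, ‖B‖ ≤ 1, and δ := δ(A,B) > 0. Then the sub-level sets L(A, δ/3^N) := {z ∈ ℂ : |A(z)| < δ/3^N} and L(B, δ/3^K) := {z ∈ ℂ : |B(z)| < δ/3^K} are disjoint. -/
open Polynomial

/-- The norm of a polynomial: the maximum of the moduli of its coefficients. -/
noncomputable def polyNorm (p : Polynomial ℂ) : ℝ :=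
  ⨆ k : ℕ, ‖p.coeff k‖

/-- `δ(A,B)`: the minimum of `|A(z)| + |B(z)|` over all `z` that is a zero of `A` or of `B`. -/
noncomputable def bezoutDelta (A B : Polynomial ℂ) : ℝ :=
  sInf ((fun z : ℂ => ‖A.eval z‖ + ‖B.eval z‖) ''
    {z : ℂ | A.eval z = 0 ∨ B.eval z = 0})

/-!
Suppose `z` lies in both sub-level sets, and let `α`, `β` be the roots of `A`, `B` nearest to `z`;
by symmetry `|z - α| ≤ |z - β|`. Then every root `β'` of `B` satisfies
`|α - β'| ≤ |α - z| + |z - β'| ≤ 2 |z - β'|`, so factoring `B` over its roots gives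
`δ ≤ |B(α)| ≤ 2^K |B(z)| ≤ 3^K |B(z)|`, contradicting `|B(z)| < δ/3^K`.
-/

theorem Polynomial.Splits.norm_eval_eq {K : Type*} [NormedField K] {B : K[X]} (hB : B.Splits)
    (z : K) : ‖B.eval z‖ = ‖B.leadingCoeff‖ * (B.roots.map fun β => ‖z - β‖).prod := by
  rw [hB.eval_eq_prod_roots, norm_mul]
  exact congrArg _ ((map_multiset_prod (normHom : K →*₀ ℝ) _).trans (by simp [Multiset.map_map]))

theorem Polynomial.Splits.norm_eval_le_two_pow_mul {K : Type*} [NormedField K] {B : K[X]}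
    (hB : B.Splits) {z α : K} (hclose : ∀ β ∈ B.roots, ‖z - α‖ ≤ ‖z - β‖) :
    ‖B.eval α‖ ≤ 2 ^ B.natDegree * ‖B.eval z‖ := by
  have hdist (β : K) (hβ : β ∈ B.roots) : ‖α - β‖ ≤ 2 * ‖z - β‖ := by
    calc ‖α - β‖ ≤ ‖z - α‖ + ‖z - β‖ := by simpa only [dist_eq_norm] using dist_triangle_left α β z
      _ ≤ 2 * ‖z - β‖ := by linarith [hclose β hβ]
  have hprod := Multiset.prod_map_le_prod_map₀ _ _ (fun β _ => norm_nonneg (α - β)) hdist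
  rw [Multiset.prod_map_mul, Multiset.map_const', Multiset.prod_replicate,
    splits_iff_card_roots.mp hB] at hprod
  rw [hB.norm_eval_eq, hB.norm_eval_eq, mul_left_comm]
  gcongr

theorem bezoutDelta_comm (A B : ℂ[X]) : bezoutDelta B A = bezoutDelta A B := by
  simp only [bezoutDelta, or_comm, add_comm]

theorem bezoutDelta_le_norm_eval {A : ℂ[X]} (B : ℂ[X]) {α : ℂ} (hα : A.IsRoot α) :
    bezoutDelta A B ≤ ‖B.eval α‖ := by
  have hbdd : BddBelow ((fun z : ℂ => ‖A.eval z‖ + ‖B.eval z‖) ''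
      {z : ℂ | A.eval z = 0 ∨ B.eval z = 0}) :=
    ⟨0, by rintro _ ⟨w, _, rfl⟩; positivity⟩
  exact csInf_le hbdd ⟨α, Or.inl hα, by simp [hα.eq_zero]⟩

theorem bezoutDelta_div_three_pow_le {A B : ℂ[X]} {z α : ℂ} (hα : A.IsRoot α)
    (hclose : ∀ β ∈ B.roots, ‖z - α‖ ≤ ‖z - β‖) :
    bezoutDelta A B / 3 ^ B.natDegree ≤ ‖B.eval z‖ := by
  have hpow : (2 : ℝ) ^ B.natDegree ≤ 3 ^ B.natDegree := by gcongr; norm_num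
  rw [div_le_iff₀ (by positivity)]
  calc bezoutDelta A B ≤ ‖B.eval α‖ := bezoutDelta_le_norm_eval B hα
    _ ≤ 2 ^ B.natDegree * ‖B.eval z‖ := (IsAlgClosed.splits B).norm_eval_le_two_pow_mul hclose
    _ ≤ ‖B.eval z‖ * 3 ^ B.natDegree := by rw [mul_comm]; gcongr

theorem Polynomial.exists_isRoot_forall_norm_sub_le {K : Type*} [NormedField K] [IsAlgClosed K]
    {A : K[X]} (hA : A.natDegree ≠ 0) (z : K) :
    ∃ α, A.IsRoot α ∧ ∀ α' ∈ A.roots, ‖z - α‖ ≤ ‖z - α'‖ := by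
  classical
  have hne : A.roots.toFinset.Nonempty := by
    rw [Multiset.toFinset_nonempty, ← Multiset.card_pos, IsAlgClosed.card_roots_eq_natDegree]
    exact Nat.pos_of_ne_zero hA
  obtain ⟨α, hα, hmin⟩ := A.roots.toFinset.exists_min_image (fun w => ‖z - w‖) hne
  rw [Multiset.mem_toFinset] at hα
  exact ⟨α, isRoot_of_mem_roots hα, fun α' hα' => hmin α' (Multiset.mem_toFinset.mpr hα')⟩

theorem sublevel_sets_disjoint_general (N K : ℕ) (hN : 1 ≤ N) (hK : 1 ≤ K)
    (A B : Polynomial ℂ) (hA : A.natDegree = N) (hB : B.natDegree = K) :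
    {z : ℂ | ‖A.eval z‖ < bezoutDelta A B / 3 ^ N} ∩
      {z : ℂ | ‖B.eval z‖ < bezoutDelta A B / 3 ^ K} = ∅ := by
  subst hA hB
  refine Set.eq_empty_of_forall_notMem fun z ⟨hzA, hzB⟩ => ?_
  obtain ⟨α, hα, hαmin⟩ := exists_isRoot_forall_norm_sub_le (by omega : A.natDegree ≠ 0) z
  obtain ⟨β, hβ, hβmin⟩ := exists_isRoot_forall_norm_sub_le (by omega : B.natDegree ≠ 0) z
  rcases le_total ‖z - α‖ ‖z - β‖ with hαβ | hβα
  · exact (bezoutDelta_div_three_pow_le hα fun β' hβ' => hαβ.trans (hβmin β' hβ')).not_gt hzB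
  · rw [← bezoutDelta_comm] at hzA
    exact (bezoutDelta_div_three_pow_le hβ fun α' hα' => hβα.trans (hαmin α' hα')).not_gt hzA

/-- **Separation lemma.** If `deg A = N ≥ 1`, `deg B = K ≥ 1`, `‖A‖ ≤ 1`, `‖B‖ ≤ 1` and
`δ := δ(A,B) > 0`, then the sub-level sets `L(A, δ/3^N)` and `L(B, δ/3^K)` are disjoint. -/
theorem sublevel_sets_disjoint (N K : ℕ) (hN : 1 ≤ N) (hK : 1 ≤ K)
    (A B : Polynomial ℂ) (hA : A.natDegree = N) (hB : B.natDegree = K)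
    (hnA : polyNorm A ≤ 1) (hnB : polyNorm B ≤ 1)
    (hδ : 0 < bezoutDelta A B) :
    {z : ℂ | ‖A.eval z‖ < bezoutDelta A B / 3 ^ N} ∩
      {z : ℂ | ‖B.eval z‖ < bezoutDelta A B / 3 ^ K} = ∅ :=
  sublevel_sets_disjoint_general N K hN hK A B hA hB
end

section
/- For all integers N, K ≥ 1 there exists a constant T > 0, depending only on N and K, such that δ(A,B) ≤ T for all complex polynomials A of degree N and B of degree K with no common zeros and with ‖A‖ ≤ 1 and ‖B‖ ≤ 1. -/
/-!
Let `z` be a root of smallest modulus among all roots of `A` and `B`; say `A z = 0`, so that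
`δ(A,B) ≤ |B z|`. Every root `b` of `B` satisfies `|z - b| ≤ |z| + |b| ≤ 2|b|`, hence factoring
`B = c ∏ (X - b)` gives `|B z| ≤ 2^K |c ∏ b| = 2^K |B 0| ≤ 2^K ‖B‖`. Thus `T = 2^N + 2^K` works.
-/

open Polynomial

theorem Polynomial.Splits.norm_eval_eq_s5 {K : Type*} [NormedField K] {p : K[X]} (hp : p.Splits)
    (x : K) : ‖p.eval x‖ = ‖p.leadingCoeff‖ * (p.roots.map fun b => ‖x - b‖).prod := by
  rw [hp.eval_eq_prod_roots, norm_mul]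
  exact congrArg _ ((map_multiset_prod (normHom (α := K)) _).trans (by rw [Multiset.map_map]; rfl))

theorem Polynomial.Splits.norm_eval_le_two_pow_mul_norm_eval_zero {K : Type*} [NormedField K]
    {p : K[X]} (hp : p.Splits) {z : K} (hz : ∀ b ∈ p.roots, ‖z‖ ≤ ‖b‖) :
    ‖p.eval z‖ ≤ 2 ^ p.natDegree * ‖p.eval 0‖ := by
  have hfactor (b : K) (hb : b ∈ p.roots) : ‖z - b‖ ≤ 2 * ‖0 - b‖ := by
    rw [zero_sub, norm_neg, two_mul]
    exact (norm_sub_le z b).trans (add_le_add_left (hz b hb) _)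
  calc ‖p.eval z‖ = ‖p.leadingCoeff‖ * (p.roots.map fun b => ‖z - b‖).prod := hp.norm_eval_eq_s5 z
    _ ≤ ‖p.leadingCoeff‖ * (p.roots.map fun b => 2 * ‖0 - b‖).prod := by
      gcongr
      exact Multiset.prod_map_le_prod_map₀ _ _ (fun _ _ => norm_nonneg _) hfactor
    _ = 2 ^ p.roots.card * ‖p.eval 0‖ := by
      rw [Multiset.prod_map_mul, Multiset.map_const', Multiset.prod_replicate, hp.norm_eval_eq_s5 0]
      ring
    _ ≤ 2 ^ p.natDegree * ‖p.eval 0‖ := by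
      gcongr
      · norm_num
      · exact p.card_roots'

theorem polyNorm_eq_supNorm (p : ℂ[X]) : polyNorm p = p.supNorm :=
  p.supNorm_eq_iSup.symm

theorem norm_eval_le_two_pow_natDegree {p : ℂ[X]} (hp : polyNorm p ≤ 1) {z : ℂ}
    (hz : ∀ b ∈ p.roots, ‖z‖ ≤ ‖b‖) : ‖p.eval z‖ ≤ 2 ^ p.natDegree := by
  have h0 : ‖p.eval 0‖ ≤ 1 := by
    rw [← coeff_zero_eq_eval_zero]
    exact (p.le_supNorm 0).trans (polyNorm_eq_supNorm p ▸ hp)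
  calc ‖p.eval z‖ ≤ 2 ^ p.natDegree * ‖p.eval 0‖ :=
        (IsAlgClosed.splits p).norm_eval_le_two_pow_mul_norm_eval_zero hz
    _ ≤ 2 ^ p.natDegree := mul_le_of_le_one_right (by positivity) h0

section bezoutDelta

variable {A B : ℂ[X]} {z : ℂ}

theorem bezoutDelta_le_of_mem (hz : A.eval z = 0 ∨ B.eval z = 0) :
    bezoutDelta A B ≤ ‖A.eval z‖ + ‖B.eval z‖ :=
  csInf_le ⟨0, by rintro _ ⟨w, -, rfl⟩; positivity⟩ ⟨z, hz, rfl⟩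

theorem bezoutDelta_le_of_isRoot_left (hz : A.IsRoot z) : bezoutDelta A B ≤ ‖B.eval z‖ := by
  simpa [hz.eq_zero] using bezoutDelta_le_of_mem (B := B) (Or.inl hz)

theorem bezoutDelta_le_of_isRoot_right (hz : B.IsRoot z) : bezoutDelta A B ≤ ‖A.eval z‖ := by
  simpa [hz.eq_zero] using bezoutDelta_le_of_mem (A := A) (Or.inr hz)

end bezoutDelta

theorem delta_bounded_general (N K : ℕ) (hN : 1 ≤ N) :
    ∃ T : ℝ, 0 < T ∧
      ∀ A B : Polynomial ℂ,
        A.natDegree = N → B.natDegree = K →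
        (∀ z : ℂ, ¬(A.eval z = 0 ∧ B.eval z = 0)) →
        polyNorm A ≤ 1 → polyNorm B ≤ 1 →
        bezoutDelta A B ≤ T := by
  refine ⟨2 ^ N + 2 ^ K, by positivity, ?_⟩
  rintro A B rfl rfl - hA hB
  have hA0 : A ≠ 0 := ne_zero_of_natDegree_gt hN
  obtain ⟨α, hα⟩ := Complex.exists_root (natDegree_pos_iff_degree_pos.1 hN)
  obtain ⟨z, hz, hmin⟩ := (A.roots + B.roots).toFinset.exists_min_image (‖·‖)
    ⟨α, Multiset.mem_toFinset.2 (Multiset.mem_add.2 (Or.inl ((mem_roots hA0).2 hα)))⟩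
  rcases Multiset.mem_add.1 (Multiset.mem_toFinset.1 hz) with hzA | hzB
  · calc bezoutDelta A B ≤ ‖B.eval z‖ := bezoutDelta_le_of_isRoot_left (isRoot_of_mem_roots hzA)
      _ ≤ 2 ^ B.natDegree := norm_eval_le_two_pow_natDegree hB fun b hb =>
          hmin b (Multiset.mem_toFinset.2 (Multiset.mem_add.2 (Or.inr hb)))
      _ ≤ _ := le_add_of_nonneg_left (by positivity)
  · calc bezoutDelta A B ≤ ‖A.eval z‖ := bezoutDelta_le_of_isRoot_right (isRoot_of_mem_roots hzB)
      _ ≤ 2 ^ A.natDegree := norm_eval_le_two_pow_natDegree hA fun a ha =>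
          hmin a (Multiset.mem_toFinset.2 (Multiset.mem_add.2 (Or.inl ha)))
      _ ≤ _ := le_add_of_nonneg_right (by positivity)

/-- **Boundedness of `δ`.** For all `N, K ≥ 1` there is a constant `T > 0` depending only on
`N` and `K` such that `δ(A,B) ≤ T` for all polynomials `A` of degree `N` and `B` of degree `K`
with no common zeros and `‖A‖ ≤ 1`, `‖B‖ ≤ 1`. -/
theorem delta_bounded (N K : ℕ) (hN : 1 ≤ N) (hK : 1 ≤ K) :
    ∃ T : ℝ, 0 < T ∧
      ∀ A B : Polynomial ℂ,
        A.natDegree = N → B.natDegree = K →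
        (∀ z : ℂ, ¬(A.eval z = 0 ∧ B.eval z = 0)) →
        polyNorm A ≤ 1 → polyNorm B ≤ 1 →
        bezoutDelta A B ≤ T :=
  delta_bounded_general N K hN
end

section
/- Let A be a complex polynomial of degree N ≥ 1 and B a complex polynomial of degree K ≥ 1 with ‖A‖ ≤ 1 and ‖B‖ ≤ 1. Then there exist sequences of complex polynomials (A_n) of degree N and (B_n) of degree K such that: (i) each A_n and each B_n has only simple roots; (ii) ‖A_n‖ ≤ 1 and ‖B_n‖ ≤ 1 for all n; (iii) A_n → A and B_n → B coefficientwise as n → ∞; and (iv) δ(A_n, B_n) → δ(A, B), where δ(P,Q) denotes the minimum of |P(z)| + |Q(z)| over all z that is a root of P or of Q. -/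
/-!
Write `A = c ∏ (X - rᵢ)` and move its `i`-th root to `rᵢ + i η`. For all but finitely many `η`
the moved roots are pairwise distinct, and dividing by `max 1 ‖·‖` restores `‖·‖ ≤ 1` without
moving any root. Everything depends continuously on `η` and gives back `A` at `η = 0`: the
coefficients are polynomials in `η`, and `δ` is the minimum of finitely many continuous functions,
one for each moved root of either polynomial. Letting `η → 0` outside the exceptional set gives
the sequences.
-/

open Polynomial Filter

open Topology Function

section ContinuousCoeff

variable {T R : Type*} [TopologicalSpace T] [CommSemiring R] [TopologicalSpace R]

def HasContinuousCoeff (P : T → R[X]) : Prop :=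
  ∀ k, Continuous fun t => (P t).coeff k

namespace HasContinuousCoeff

lemma const (p : R[X]) : HasContinuousCoeff fun _ : T => p :=
  fun _ => continuous_const

lemma C {s : T → R} (hs : Continuous s) : HasContinuousCoeff fun t => C (s t) := by
  intro k
  simp only [coeff_C]
  split_ifs
  exacts [hs, continuous_const]

variable [IsTopologicalSemiring R]

lemma mul {P Q : T → R[X]} (hP : HasContinuousCoeff P) (hQ : HasContinuousCoeff Q) :
    HasContinuousCoeff fun t => P t * Q t := by
  intro k
  simp only [coeff_mul]
  exact continuous_finsetSum _ fun x _ => (hP x.1).mul (hQ x.2)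

lemma prod {ι : Type*} (s : Finset ι) {P : ι → T → R[X]}
    (hP : ∀ i ∈ s, HasContinuousCoeff (P i)) : HasContinuousCoeff fun t => ∏ i ∈ s, P i t := by
  simp only [← Finset.prod_apply]
  exact Finset.prod_induction _ HasContinuousCoeff (fun _ _ => mul) (const 1) hP

lemma continuous_eval {P : T → R[X]} (hP : HasContinuousCoeff P) {M : ℕ}
    (hdeg : ∀ t, (P t).natDegree ≤ M) {w : T → R} (hw : Continuous w) :
    Continuous fun t => (P t).eval (w t) := by
  simp only [fun t => eval_eq_sum_range' (Nat.lt_succ_of_le (hdeg t))]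
  exact continuous_finsetSum _ fun i _ => (hP i).mul (hw.pow i)

end HasContinuousCoeff

lemma HasContinuousCoeff.sub {R : Type*} [CommRing R] [TopologicalSpace R]
    [IsTopologicalRing R] {P Q : T → R[X]} (hP : HasContinuousCoeff P) (hQ : HasContinuousCoeff Q) :
    HasContinuousCoeff fun t => P t - Q t := by
  intro k
  simp only [coeff_sub]
  exact (hP k).sub (hQ k)

end ContinuousCoeff

lemma norm_coeff_le_sup'_range {p : ℂ[X]} {M : ℕ} (h : p.natDegree ≤ M) (k : ℕ) :
    ‖p.coeff k‖ ≤ (Finset.range (M + 1)).sup' Finset.nonempty_range_add_one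
      fun i => ‖p.coeff i‖ := by
  rcases le_or_gt k M with hk | hk
  · exact Finset.le_sup' (fun i => ‖p.coeff i‖) (Finset.mem_range.2 (Nat.lt_succ_of_le hk))
  · rw [coeff_eq_zero_of_natDegree_lt (h.trans_lt hk), norm_zero]
    exact (norm_nonneg _).trans
      (Finset.le_sup' (fun i => ‖p.coeff i‖) (Finset.mem_range.2 M.succ_pos))

lemma polyNorm_eq_sup'_range {p : ℂ[X]} {M : ℕ} (h : p.natDegree ≤ M) :
    polyNorm p = (Finset.range (M + 1)).sup' Finset.nonempty_range_add_one
      fun i => ‖p.coeff i‖ :=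
  le_antisymm (ciSup_le (norm_coeff_le_sup'_range h)) <| Finset.sup'_le _ _ fun i _ =>
    le_ciSup ⟨_, Set.forall_mem_range.2 (norm_coeff_le_sup'_range h)⟩ i

lemma polyNorm_C_mul (s : ℂ) (p : ℂ[X]) : polyNorm (C s * p) = ‖s‖ * polyNorm p := by
  simp only [polyNorm, coeff_C_mul, norm_mul]
  exact (Real.mul_iSup_of_nonneg (norm_nonneg s) _).symm

lemma HasContinuousCoeff.continuous_polyNorm {T : Type*} [TopologicalSpace T] {P : T → ℂ[X]}
    (hP : HasContinuousCoeff P) {M : ℕ} (hdeg : ∀ t, (P t).natDegree ≤ M) :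
    Continuous fun t => polyNorm (P t) := by
  simp only [polyNorm_eq_sup'_range (hdeg _)]
  exact Continuous.finset_sup'_apply _ fun k _ => (hP k).norm

noncomputable def scaleToUnitBall (p : ℂ[X]) : ℂ[X] :=
  C (((max 1 (polyNorm p))⁻¹ : ℝ) : ℂ) * p

lemma scaleToUnitBall_factor_ne_zero (p : ℂ[X]) : (((max 1 (polyNorm p))⁻¹ : ℝ) : ℂ) ≠ 0 := by
  have : 0 < max 1 (polyNorm p) := lt_max_of_lt_left one_pos
  exact_mod_cast (inv_pos.2 this).ne'

lemma natDegree_scaleToUnitBall (p : ℂ[X]) : (scaleToUnitBall p).natDegree = p.natDegree :=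
  natDegree_C_mul (scaleToUnitBall_factor_ne_zero p)

lemma roots_scaleToUnitBall (p : ℂ[X]) : (scaleToUnitBall p).roots = p.roots :=
  roots_C_mul p (scaleToUnitBall_factor_ne_zero p)

lemma eval_scaleToUnitBall_eq_zero_iff (p : ℂ[X]) (z : ℂ) :
    (scaleToUnitBall p).eval z = 0 ↔ p.eval z = 0 := by
  rw [scaleToUnitBall, eval_mul, eval_C, mul_eq_zero,
    or_iff_right (scaleToUnitBall_factor_ne_zero p)]

lemma polyNorm_scaleToUnitBall_le (p : ℂ[X]) : polyNorm (scaleToUnitBall p) ≤ 1 := by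
  have hpos : 0 < max 1 (polyNorm p) := lt_max_of_lt_left one_pos
  rw [scaleToUnitBall, polyNorm_C_mul, Complex.norm_real,
    Real.norm_of_nonneg (inv_pos.2 hpos).le, inv_mul_le_one₀ hpos]
  exact le_max_right _ _

lemma scaleToUnitBall_of_polyNorm_le_one {p : ℂ[X]} (hp : polyNorm p ≤ 1) :
    scaleToUnitBall p = p := by
  simp [scaleToUnitBall, max_eq_left hp]

lemma HasContinuousCoeff.scaleToUnitBall {T : Type*} [TopologicalSpace T] {P : T → ℂ[X]}
    (hP : HasContinuousCoeff P) {M : ℕ} (hdeg : ∀ t, (P t).natDegree ≤ M) :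
    HasContinuousCoeff fun t => scaleToUnitBall (P t) :=
  (HasContinuousCoeff.C (Complex.continuous_ofReal.comp
    ((continuous_const.max (hP.continuous_polyNorm hdeg)).inv₀
      fun _ => (lt_max_of_lt_left one_pos).ne'))).mul hP

section Spread

variable {K : Type*} [Field K]

def spread {n : ℕ} (z : Fin n → K) (η : K) : Fin n → K :=
  fun i => z i + i * η

lemma finite_setOf_not_injective_spread [CharZero K] {n : ℕ} (z : Fin n → K) :
    {η | ¬Injective (spread z η)}.Finite := by
  refine (Set.finite_iUnion fun p : Fin n × Fin n =>
    (?_ : {η : K | p.1 ≠ p.2 ∧ spread z η p.1 = spread z η p.2}.Subsingleton).finite).subset ?_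
  · rintro η ⟨hne, h⟩ η' ⟨-, h'⟩
    have hij : ((p.1 : ℕ) - (p.2 : ℕ) : K) ≠ 0 :=
      sub_ne_zero.2 (by exact_mod_cast Fin.val_ne_of_ne hne)
    simp only [spread] at h h'
    exact mul_left_cancel₀ hij (by linear_combination h - h')
  · intro η h
    simp only [Injective, not_forall] at h
    obtain ⟨i, j, hij, hne⟩ := h
    exact Set.mem_iUnion.2 ⟨(i, j), hne, hij⟩

noncomputable def rootTuple (p : K[X]) : Fin p.roots.toList.length → K :=
  fun i => p.roots.toList[(i : ℕ)]

noncomputable def spreadPoly (p : K[X]) (η : K) : K[X] :=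
  C p.leadingCoeff * ∏ i, (X - C (spread (rootTuple p) η i))

variable {p : K[X]}

lemma roots_spreadPoly (hp : p ≠ 0) (η : K) :
    (spreadPoly p η).roots = Finset.univ.val.map (spread (rootTuple p) η) := by
  rw [spreadPoly, roots_C_mul _ (leadingCoeff_ne_zero.2 hp),
    roots_prod _ _ (Finset.prod_ne_zero_iff.2 fun i _ => X_sub_C_ne_zero _)]
  simp [roots_X_sub_C, Multiset.bind_singleton]

lemma eval_spreadPoly_eq_zero_iff (hp : p ≠ 0) (η z : K) :
    (spreadPoly p η).eval z = 0 ↔ z ∈ Set.range (spread (rootTuple p) η) := by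
  simp only [spreadPoly, eval_mul, eval_C, eval_prod, eval_sub, eval_X, mul_eq_zero,
    leadingCoeff_eq_zero, hp, false_or, Finset.prod_eq_zero_iff, Finset.mem_univ, true_and,
    sub_eq_zero, Set.mem_range, @eq_comm _ z]

lemma natDegree_spreadPoly [IsAlgClosed K] (hp : p ≠ 0) (η : K) :
    (spreadPoly p η).natDegree = p.natDegree := by
  rw [spreadPoly, natDegree_C_mul (leadingCoeff_ne_zero.2 hp),
    natDegree_finsetProd_X_sub_C_eq_card, Finset.card_univ, Fintype.card_fin,
    Multiset.length_toList, IsAlgClosed.card_roots_eq_natDegree]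

lemma spreadPoly_zero [IsAlgClosed K] (p : K[X]) : spreadPoly p 0 = p := by
  have : spread (rootTuple p) 0 = rootTuple p := by ext; simp [spread]
  rw [spreadPoly, this]
  unfold rootTuple
  rw [Fin.prod_univ_fun_getElem p.roots.toList (fun a => X - C a),
    Multiset.prod_map_toList, C_leadingCoeff_mul_prod_multiset_X_sub_C
      IsAlgClosed.card_roots_eq_natDegree]

lemma hasContinuousCoeff_spreadPoly [TopologicalSpace K] [IsTopologicalRing K] (p : K[X]) :
    HasContinuousCoeff (spreadPoly p) :=
  (HasContinuousCoeff.const _).mul <| HasContinuousCoeff.prod _ fun i _ =>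
    (HasContinuousCoeff.const X).sub (HasContinuousCoeff.C (by unfold spread; fun_prop))

end Spread

noncomputable def simpleRootApprox (p : ℂ[X]) (η : ℂ) : ℂ[X] :=
  scaleToUnitBall (spreadPoly p η)

section SimpleRootApprox

variable {p : ℂ[X]}

lemma natDegree_simpleRootApprox (hp : p ≠ 0) (η : ℂ) :
    (simpleRootApprox p η).natDegree = p.natDegree := by
  rw [simpleRootApprox, natDegree_scaleToUnitBall, natDegree_spreadPoly hp]

lemma roots_simpleRootApprox (hp : p ≠ 0) (η : ℂ) :
    (simpleRootApprox p η).roots = Finset.univ.val.map (spread (rootTuple p) η) := by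
  rw [simpleRootApprox, roots_scaleToUnitBall, roots_spreadPoly hp]

lemma eval_simpleRootApprox_eq_zero_iff (hp : p ≠ 0) (η z : ℂ) :
    (simpleRootApprox p η).eval z = 0 ↔ z ∈ Set.range (spread (rootTuple p) η) := by
  rw [simpleRootApprox, eval_scaleToUnitBall_eq_zero_iff, eval_spreadPoly_eq_zero_iff hp]

lemma simpleRootApprox_zero (hnp : polyNorm p ≤ 1) : simpleRootApprox p 0 = p := by
  rw [simpleRootApprox, spreadPoly_zero, scaleToUnitBall_of_polyNorm_le_one hnp]

lemma hasContinuousCoeff_simpleRootApprox (p : ℂ[X]) :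
    HasContinuousCoeff (simpleRootApprox p) :=
  (hasContinuousCoeff_spreadPoly p).scaleToUnitBall fun _ =>
    (natDegree_C_mul_le _ _).trans_eq (natDegree_finsetProd_X_sub_C_eq_card _ _)

end SimpleRootApprox

lemma HasContinuousCoeff.continuous_bezoutDelta {T : Type*} [TopologicalSpace T]
    {P Q : T → ℂ[X]} (hP : HasContinuousCoeff P) (hQ : HasContinuousCoeff Q) {m n : ℕ}
    (hdegP : ∀ t, (P t).natDegree ≤ m) (hdegQ : ∀ t, (Q t).natDegree ≤ n)
    {ι : Type*} [Fintype ι] {w : T → ι → ℂ} (hw : ∀ i, Continuous fun t => w t i)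
    (hzeros : ∀ t z, (P t).eval z = 0 ∨ (Q t).eval z = 0 ↔ z ∈ Set.range (w t)) :
    Continuous fun t => bezoutDelta (P t) (Q t) := by
  have hzeros' t : {z | (P t).eval z = 0 ∨ (Q t).eval z = 0} = Set.range (w t) :=
    Set.ext (hzeros t)
  rcases isEmpty_or_nonempty ι with hι | hι
  · simp only [bezoutDelta, hzeros', Set.range_eq_empty, Set.image_empty, Real.sInf_empty]
    exact continuous_const
  have hδ t : bezoutDelta (P t) (Q t) = Finset.univ.inf' Finset.univ_nonempty
      fun i => ‖(P t).eval (w t i)‖ + ‖(Q t).eval (w t i)‖ := by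
    rw [bezoutDelta, hzeros', ← Set.range_comp, Finset.inf'_univ_eq_ciInf]
    rfl
  simp only [hδ]
  exact Continuous.finset_inf'_apply _ fun i _ =>
    (hP.continuous_eval hdegP (hw i)).norm.add (hQ.continuous_eval hdegQ (hw i)).norm

/-- **Reduction lemma.** Any `A` of degree `N ≥ 1` and `B` of degree `K ≥ 1` with
`‖A‖ ≤ 1`, `‖B‖ ≤ 1` can be approximated coefficientwise by polynomials `Aₙ`, `Bₙ` of the
same degrees with only simple roots, with `‖Aₙ‖ ≤ 1`, `‖Bₙ‖ ≤ 1` and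
`δ(Aₙ, Bₙ) → δ(A, B)`. -/
theorem approximation_simple_roots (N K : ℕ) (hN : 1 ≤ N) (hK : 1 ≤ K)
    (A B : Polynomial ℂ) (hA : A.natDegree = N) (hB : B.natDegree = K)
    (hnA : polyNorm A ≤ 1) (hnB : polyNorm B ≤ 1) :
    ∃ An Bn : ℕ → Polynomial ℂ,
      (∀ n, (An n).natDegree = N) ∧ (∀ n, (Bn n).natDegree = K) ∧
      (∀ n, (An n).roots.Nodup) ∧ (∀ n, (Bn n).roots.Nodup) ∧
      (∀ n, polyNorm (An n) ≤ 1) ∧ (∀ n, polyNorm (Bn n) ≤ 1) ∧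
      (∀ k : ℕ, Tendsto (fun n => (An n).coeff k) atTop (nhds (A.coeff k))) ∧
      (∀ k : ℕ, Tendsto (fun n => (Bn n).coeff k) atTop (nhds (B.coeff k))) ∧
      Tendsto (fun n => bezoutDelta (An n) (Bn n)) atTop (nhds (bezoutDelta A B)) := by
  have hA0 : A ≠ 0 := by rintro rfl; simp at hA; omega
  have hB0 : B ≠ 0 := by rintro rfl; simp at hB; omega
  obtain ⟨η, hη, hη0⟩ := mem_closure_iff_seq_limit.1
    (((finite_setOf_not_injective_spread (rootTuple A)).union
      (finite_setOf_not_injective_spread (rootTuple B))).countable.dense_compl ℝ 0)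
  have hinj n :
      Injective (spread (rootTuple A) (η n)) ∧ Injective (spread (rootTuple B) (η n)) := by
    simpa [not_or] using hη n
  have hlim {α : Type} [TopologicalSpace α] {f : ℂ → α} (hf : Continuous f) :
      Tendsto (fun n => f (η n)) atTop (𝓝 (f 0)) :=
    (hf.tendsto 0).comp hη0
  refine ⟨fun n => simpleRootApprox A (η n), fun n => simpleRootApprox B (η n),
    fun n => (natDegree_simpleRootApprox hA0 _).trans hA,
    fun n => (natDegree_simpleRootApprox hB0 _).trans hB,
    fun n => by rw [roots_simpleRootApprox hA0]; exact Finset.univ.nodup.map (hinj n).1,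
    fun n => by rw [roots_simpleRootApprox hB0]; exact Finset.univ.nodup.map (hinj n).2,
    fun n => polyNorm_scaleToUnitBall_le _, fun n => polyNorm_scaleToUnitBall_le _,
    fun k => ?_, fun k => ?_, ?_⟩
  · simpa only [simpleRootApprox_zero hnA] using hlim (hasContinuousCoeff_simpleRootApprox A k)
  · simpa only [simpleRootApprox_zero hnB] using hlim (hasContinuousCoeff_simpleRootApprox B k)
  · have hδ := (hasContinuousCoeff_simpleRootApprox A).continuous_bezoutDelta
      (hasContinuousCoeff_simpleRootApprox B)
      (fun η => (natDegree_simpleRootApprox hA0 η).le)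
      (fun η => (natDegree_simpleRootApprox hB0 η).le)
      (w := fun η => Sum.elim (spread (rootTuple A) η) (spread (rootTuple B) η))
      (fun i => by cases i <;> simp only [Sum.elim_inl, Sum.elim_inr, spread] <;> fun_prop)
      (fun η z => by
        rw [eval_simpleRootApprox_eq_zero_iff hA0, eval_simpleRootApprox_eq_zero_iff hB0,
          Set.Sum.elim_range, Set.mem_union])
    simpa only [simpleRootApprox_zero hnA, simpleRootApprox_zero hnB] using hlim hδ
end

section
/- Let α_1, …, α_N and β_1, …, β_K be complex numbers (N, K ≥ 1). Define E_A := ∩_{j=1}^K ∪_{i=1}^N D(α_i, |β_j − α_i|/3) and E_B := ∩_{i=1}^N ∪_{j=1}^K D(β_j, |α_i − β_j|/3), where D(a, r) := {z ∈ ℂ : |z − a| < r}. Then E_A ∩ E_B = ∅. -/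
/-!
If `z` lies in `D(b, d(a, b)/3)` then `d(z, b) < d(z, a)`: the triangle inequality
`d(a, b) ≤ d(a, z) + d(z, b)` even gives `2 d(z, b) < d(z, a)`. So a point of `E_B` has, for
every `αᵢ`, some `βⱼ` strictly closer to it, and a point of `E_A` has, for every `βⱼ`, some `αᵢ`
strictly closer to it. Applied to the `αᵢ` nearest to `z`, these two facts contradict each other.
-/

open Metric Set

section

variable {X : Type*} [PseudoMetricSpace X]

theorem dist_lt_of_mem_ball_dist_div_three {z a b : X} (h : z ∈ ball b (dist a b / 3)) :
    dist z b < dist z a := by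
  rw [mem_ball] at h
  have := dist_triangle_left a b z
  have := dist_nonneg (x := z) (y := b)
  linarith

theorem exists_dist_lt_of_mem_iInter_iUnion_ball {ι κ : Type*} {a : ι → X} {b : κ → X} {z : X}
    (hz : z ∈ ⋂ i, ⋃ j, ball (b j) (dist (a i) (b j) / 3)) (i : ι) :
    ∃ j, dist z (b j) < dist z (a i) := by
  obtain ⟨j, hj⟩ := mem_iUnion.mp (mem_iInter.mp hz i)
  exact ⟨j, dist_lt_of_mem_ball_dist_div_three hj⟩

theorem disjoint_iInter_iUnion_ball_dist_div_three {ι κ : Type*} [Finite ι] [Nonempty ι]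
    (a : ι → X) (b : κ → X) :
    Disjoint (⋂ j, ⋃ i, ball (a i) (dist (b j) (a i) / 3))
      (⋂ i, ⋃ j, ball (b j) (dist (a i) (b j) / 3)) := by
  refine Set.disjoint_left.mpr fun z hA hB => ?_
  obtain ⟨i₀, hi₀⟩ := Finite.exists_min fun i => dist z (a i)
  obtain ⟨j, hj⟩ := exists_dist_lt_of_mem_iInter_iUnion_ball hB i₀
  obtain ⟨i, hi⟩ := exists_dist_lt_of_mem_iInter_iUnion_ball hA j
  exact (hi.trans hj).not_ge (hi₀ i)

end

theorem disk_regions_disjoint_general (N K : ℕ) (hN : 1 ≤ N)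
    (α : Fin N → ℂ) (β : Fin K → ℂ) :
    (⋂ j : Fin K, ⋃ i : Fin N, Metric.ball (α i) (‖β j - α i‖ / 3)) ∩
      (⋂ i : Fin N, ⋃ j : Fin K, Metric.ball (β j) (‖α i - β j‖ / 3)) = ∅ := by
  have : Nonempty (Fin N) := ⟨⟨0, hN⟩⟩
  simp only [← dist_eq_norm]
  exact Set.disjoint_iff_inter_eq_empty.mp (disjoint_iInter_iUnion_ball_dist_div_three α β)

/-- **Disjointness of the disk regions.** For complex numbers `α₁, …, α_N` and
`β₁, …, β_K`, the sets
`E_A = ∩ⱼ ∪ᵢ D(αᵢ, |βⱼ - αᵢ|/3)` and `E_B = ∩ᵢ ∪ⱼ D(βⱼ, |αᵢ - βⱼ|/3)` are disjoint. -/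
theorem disk_regions_disjoint (N K : ℕ) (hN : 1 ≤ N) (hK : 1 ≤ K)
    (α : Fin N → ℂ) (β : Fin K → ℂ) :
    (⋂ j : Fin K, ⋃ i : Fin N, Metric.ball (α i) (‖β j - α i‖ / 3)) ∩
      (⋂ i : Fin N, ⋃ j : Fin K, Metric.ball (β j) (‖α i - β j‖ / 3)) = ∅ :=
  disk_regions_disjoint_general N K hN α β
end

section
/- Let A be a complex polynomial of degree N ≥ 1 with roots α_1, …, α_N (with multiplicity) and let β_1, …, β_K (K ≥ 1) be complex numbers with δ := min_{1 ≤ j ≤ K} |A(β_j)| > 0. Then the sub-level set L(A, δ/3^N) := {z ∈ ℂ : |A(z)| < δ/3^N} is contained in E_A := ∩_{j=1}^K ∪_{i=1}^N D(α_i, |β_j − α_i|/3), where D(a, r) := {z ∈ ℂ : |z − a| < r}. -/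
open Polynomial

/-!
If `z` were outside every disk `D(αᵢ, |β - αᵢ|/3)`, then `|β - αᵢ| ≤ 3 |z - αᵢ|` for each root,
and multiplying these `N` inequalities in the factorization `A = a ∏ (X - αᵢ)` gives
`|A(β)| ≤ 3^N |A(z)|`, so `|A(z)| ≥ δ / 3^N`.
-/

section RootFactorization

variable {𝕜 ι : Type*} [NormedField 𝕜] [Fintype ι] (a : 𝕜) (α : ι → 𝕜)

theorem norm_eval_C_mul_prod_X_sub_C (z : 𝕜) :
    ‖(C a * ∏ i, (X - C (α i))).eval z‖ = ‖a‖ * ∏ i, ‖z - α i‖ := by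
  simp [eval_prod, norm_prod]

theorem norm_eval_C_mul_prod_X_sub_C_le {w z : 𝕜} {c : ℝ}
    (h : ∀ i, ‖w - α i‖ ≤ c * ‖z - α i‖) :
    ‖(C a * ∏ i, (X - C (α i))).eval w‖ ≤
      c ^ Fintype.card ι * ‖(C a * ∏ i, (X - C (α i))).eval z‖ := by
  rw [norm_eval_C_mul_prod_X_sub_C, norm_eval_C_mul_prod_X_sub_C]
  calc ‖a‖ * ∏ i, ‖w - α i‖ ≤ ‖a‖ * ∏ i, (c * ‖z - α i‖) := by
        gcongr with i
        exact h i
    _ = c ^ Fintype.card ι * (‖a‖ * ∏ i, ‖z - α i‖) := by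
        rw [Finset.prod_mul_distrib, Finset.prod_const, Finset.card_univ]
        ring

theorem exists_norm_sub_lt_div_of_norm_eval_lt_div {w z : 𝕜} {c : ℝ} (hc : 0 < c)
    (h : ‖(C a * ∏ i, (X - C (α i))).eval z‖ <
      ‖(C a * ∏ i, (X - C (α i))).eval w‖ / c ^ Fintype.card ι) :
    ∃ i, ‖z - α i‖ < ‖w - α i‖ / c := by
  by_contra! hfar
  have hle := norm_eval_C_mul_prod_X_sub_C_le a α fun i ↦ (div_le_iff₀' hc).mp (hfar i)
  rw [lt_div_iff₀ (pow_pos hc _)] at h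
  linarith

end RootFactorization

theorem sublevel_subset_disks_general (N K : ℕ) (hK : 1 ≤ K)
    (aN : ℂ) (α : Fin N → ℂ) (β : Fin K → ℂ)
    (A : Polynomial ℂ)
    (hA : A = Polynomial.C aN * ∏ i : Fin N, (Polynomial.X - Polynomial.C (α i)))
    (δ : ℝ)
    (hδ : δ = Finset.univ.inf' ⟨⟨0, hK⟩, Finset.mem_univ _⟩
      (fun j : Fin K => ‖A.eval (β j)‖)) :
    {z : ℂ | ‖A.eval z‖ < δ / 3 ^ N} ⊆
      ⋂ j : Fin K, ⋃ i : Fin N, Metric.ball (α i) (‖β j - α i‖ / 3) := by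
  intro z hz
  simp only [Set.mem_iInter, Set.mem_iUnion, Metric.mem_ball, dist_eq_norm]
  intro j
  have hδ_le : δ ≤ ‖A.eval (β j)‖ := hδ ▸ Finset.inf'_le _ (Finset.mem_univ j)
  have hz_lt : ‖A.eval z‖ < ‖A.eval (β j)‖ / 3 ^ Fintype.card (Fin N) := by
    rw [Fintype.card_fin]
    exact hz.trans_le (by gcongr)
  subst hA
  exact exists_norm_sub_lt_div_of_norm_eval_lt_div aN α three_pos hz_lt

/-- **Sub-level set inclusion.** Let `A` have degree `N ≥ 1` with roots `α₁, …, α_N`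
(with multiplicity), let `β₁, …, β_K` be complex numbers, and let
`δ = minⱼ |A(βⱼ)| > 0`. Then `L(A, δ/3^N) ⊆ E_A = ∩ⱼ ∪ᵢ D(αᵢ, |βⱼ - αᵢ|/3)`. -/
theorem sublevel_subset_disks (N K : ℕ) (hN : 1 ≤ N) (hK : 1 ≤ K)
    (aN : ℂ) (haN : aN ≠ 0) (α : Fin N → ℂ) (β : Fin K → ℂ)
    (A : Polynomial ℂ)
    (hA : A = Polynomial.C aN * ∏ i : Fin N, (Polynomial.X - Polynomial.C (α i)))
    (δ : ℝ)
    (hδ : δ = Finset.univ.inf' ⟨⟨0, hK⟩, Finset.mem_univ _⟩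
      (fun j : Fin K => ‖A.eval (β j)‖))
    (hδpos : 0 < δ) :
    {z : ℂ | ‖A.eval z‖ < δ / 3 ^ N} ⊆
      ⋂ j : Fin K, ⋃ i : Fin N, Metric.ball (α i) (‖β j - α i‖ / 3) :=
  sublevel_subset_disks_general N K hK aN α β A hA δ hδ
end

section
/- Let N ≥ 1 be an integer, 0 < a < 1, and w := e^{2πi/(2N−1)}. Set A(z) := z^N, B(z) := ∏_{j=1}^N (z − a w^j), R(z) := a^{−(2N−1)} z^{N−1}, and S(z) := −a^{−(2N−1)} ∏_{j=N+1}^{2N−1} (z − a w^j). Then A(z) R(z) + B(z) S(z) = 1 for all z ∈ ℂ, δ(A,B) = a^N, and ‖R‖ = a^{−(2N−1)} = δ(A,B)^{−2 + 1/N}. -/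
open Polynomial

theorem prod_Icc_X_sub_C_mul_pow {R : Type*} [CommRing R] [IsDomain R] {n : ℕ} {ζ : R}
    (hζ : IsPrimitiveRoot ζ n) (hn : 0 < n) (c : R) :
    ∏ j ∈ Finset.Icc 1 n, (X - C (c * ζ ^ j)) = X ^ n - C (c ^ n) := by
  -- Factor with the root `c * ζ`: then `ζ ^ i * (c * ζ) = c * ζ ^ (i + 1)` shifts `range n` to `Icc 1 n`.
  rw [X_pow_sub_C_eq_prod hζ hn (α := c * ζ) (by rw [mul_pow, hζ.pow_eq_one, mul_one]),
    Finset.range_eq_Ico, ← Finset.Ico_add_one_right_eq_Icc, ← Finset.prod_Ico_add' _ 0 n 1]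
  refine Finset.prod_congr rfl fun i _ => ?_
  rw [pow_succ]
  ring_nf

theorem prod_Icc_one_mul_prod_Icc_succ {M : Type*} [CommMonoid M] (f : ℕ → M) {m n : ℕ}
    (hmn : m ≤ n) :
    (∏ i ∈ Finset.Icc 1 m, f i) * ∏ i ∈ Finset.Icc (m + 1) n, f i = ∏ i ∈ Finset.Icc 1 n, f i := by
  rw [Finset.Icc_add_one_left_eq_Ioc, show Finset.Icc 1 m = Finset.Ioc 0 m from
    Finset.Icc_add_one_left_eq_Ioc 0 m, show Finset.Icc 1 n = Finset.Ioc 0 n from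
    Finset.Icc_add_one_left_eq_Ioc 0 n]
  exact Finset.prod_Ioc_consecutive f (Nat.zero_le m) hmn

theorem X_pow_mul_add_mul_eq_one {K : Type*} [Field K] {m n k : ℕ} (hk : m + n = k) {b : K}
    (hb : b ≠ 0) {B T : K[X]} (hBT : B * T = X ^ k - C b) :
    X ^ m * (C b⁻¹ * X ^ n) + B * (-C b⁻¹ * T) = 1 := by
  calc X ^ m * (C b⁻¹ * X ^ n) + B * (-C b⁻¹ * T) = C b⁻¹ * (X ^ k - B * T) := by
        rw [← hk, pow_add]; ring
    _ = 1 := by rw [hBT, sub_sub_cancel, ← C_mul, inv_mul_cancel₀ hb, C_1]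

theorem bezoutDelta_X_pow_prod {ι : Type*} (s : Finset ι) (r : ι → ℂ) {ρ : ℝ}
    (hr : ∀ i ∈ s, ‖r i‖ = ρ) {N : ℕ} (hs : s.card = N) (hN : N ≠ 0) :
    bezoutDelta (X ^ N) (∏ i ∈ s, (X - C (r i))) = ρ ^ N := by
  have hB0 : ‖(∏ i ∈ s, (X - C (r i))).eval 0‖ = ρ ^ N := by
    simp only [eval_prod, eval_sub, eval_X, eval_C, zero_sub, norm_neg, norm_prod]
    rw [Finset.prod_congr rfl hr, Finset.prod_const, hs]
  have himage : (fun z : ℂ => ‖(X ^ N : ℂ[X]).eval z‖ + ‖(∏ i ∈ s, (X - C (r i))).eval z‖) ''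
      {z | (X ^ N : ℂ[X]).eval z = 0 ∨ (∏ i ∈ s, (X - C (r i))).eval z = 0} = {ρ ^ N} := by
    refine Set.eq_singleton_iff_unique_mem.2 ⟨⟨0, by simp [hN], by simp [hB0, hN]⟩, ?_⟩
    rintro _ ⟨z, hz | hz, rfl⟩
    · obtain rfl : z = 0 := by simpa [hN] using hz
      simp [hB0, hN]
    · obtain ⟨i, hi, hzi⟩ := Finset.prod_eq_zero_iff.1 (by simpa [eval_prod] using hz)
      obtain rfl : z = r i := sub_eq_zero.1 hzi
      simp [hz, hr i hi]
  rw [bezoutDelta, himage, csInf_singleton]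

theorem polyNorm_C_mul_X_pow (c : ℂ) (n : ℕ) : polyNorm (C c * X ^ n) = ‖c‖ := by
  have hcoeff : ∀ k, ‖(C c * X ^ n).coeff k‖ ≤ ‖c‖ := fun k => by
    rw [coeff_C_mul_X_pow]; split_ifs <;> simp
  unfold polyNorm
  refine le_antisymm (ciSup_le hcoeff) ?_
  simpa using le_ciSup ⟨‖c‖, Set.forall_mem_range.2 hcoeff⟩ n

theorem inv_pow_two_mul_sub_one_eq_rpow {a : ℝ} (ha : 0 ≤ a) {N : ℕ} (hN : N ≠ 0) :
    (a ^ (2 * N - 1))⁻¹ = (a ^ N) ^ ((-2 : ℝ) + 1 / N) := by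
  have hexp : (N : ℝ) * ((-2 : ℝ) + 1 / N) = -((2 * N - 1 : ℕ) : ℝ) := by
    push_cast [Nat.cast_sub (by omega : 1 ≤ 2 * N)]
    field_simp
    ring
  rw [← Real.rpow_natCast a N, ← Real.rpow_mul ha, hexp, Real.rpow_neg ha, Real.rpow_natCast]

theorem optimality_example_general (N : ℕ) (hN : 1 ≤ N) (a : ℝ) (ha0 : 0 < a)
    (w : ℂ) (hw : w = Complex.exp (2 * Real.pi * Complex.I / (2 * (N : ℂ) - 1)))
    (A B R S : Polynomial ℂ)
    (hA : A = Polynomial.X ^ N)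
    (hB : B = ∏ j ∈ Finset.Icc 1 N, (Polynomial.X - Polynomial.C ((a : ℂ) * w ^ j)))
    (hR : R = Polynomial.C (((a : ℂ) ^ (2 * N - 1))⁻¹) * Polynomial.X ^ (N - 1))
    (hS : S = -Polynomial.C (((a : ℂ) ^ (2 * N - 1))⁻¹) *
      ∏ j ∈ Finset.Icc (N + 1) (2 * N - 1), (Polynomial.X - Polynomial.C ((a : ℂ) * w ^ j))) :
    (∀ z : ℂ, A.eval z * R.eval z + B.eval z * S.eval z = 1) ∧
    bezoutDelta A B = a ^ N ∧
    polyNorm R = (a ^ (2 * N - 1))⁻¹ ∧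
    (a ^ (2 * N - 1))⁻¹ = bezoutDelta A B ^ ((-2 : ℝ) + 1 / (N : ℝ)) := by
  have hM : 0 < 2 * N - 1 := by omega
  have hprim : IsPrimitiveRoot w (2 * N - 1) := by
    have := Complex.isPrimitiveRoot_exp (2 * N - 1) hM.ne'
    rwa [Nat.cast_sub (by omega), Nat.cast_mul, Nat.cast_ofNat, Nat.cast_one, ← hw] at this
  have hfactor : B * ∏ j ∈ Finset.Icc (N + 1) (2 * N - 1), (X - C ((a : ℂ) * w ^ j)) =
      X ^ (2 * N - 1) - C ((a : ℂ) ^ (2 * N - 1)) := by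
    rw [hB, prod_Icc_one_mul_prod_Icc_succ _ (by omega), prod_Icc_X_sub_C_mul_pow hprim hM]
  have hδ : bezoutDelta A B = a ^ N := by
    rw [hA, hB]
    refine bezoutDelta_X_pow_prod _ _ (fun j _ => ?_) (Nat.card_Icc 1 N) (by omega)
    simp [hprim.norm'_eq_one hM.ne', ha0.le]
  refine ⟨fun z => ?_, hδ, ?_, ?_⟩
  · have hbezout := X_pow_mul_add_mul_eq_one (m := N) (n := N - 1) (by omega)
      (pow_ne_zero _ (by exact_mod_cast ha0.ne')) hfactor
    rw [← hA, ← hR, ← hS] at hbezout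
    simpa using congrArg (eval z) hbezout
  · rw [hR, polyNorm_C_mul_X_pow]
    simp [abs_of_pos ha0]
  · rw [hδ, inv_pow_two_mul_sub_one_eq_rpow ha0.le (by omega)]

/-- **Optimality example.** For `N ≥ 1`, `0 < a < 1` and `w = e^{2πi/(2N-1)}`, the
polynomials `A = z^N`, `B = ∏_{j=1}^N (z - a wʲ)`, `R = a^{-(2N-1)} z^{N-1}` and
`S = -a^{-(2N-1)} ∏_{j=N+1}^{2N-1} (z - a wʲ)` satisfy `A R + B S = 1`, `δ(A,B) = a^N`,
and `‖R‖ = a^{-(2N-1)} = δ(A,B)^{-2 + 1/N}`. -/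
theorem optimality_example (N : ℕ) (hN : 1 ≤ N) (a : ℝ) (ha0 : 0 < a) (ha1 : a < 1)
    (w : ℂ) (hw : w = Complex.exp (2 * Real.pi * Complex.I / (2 * (N : ℂ) - 1)))
    (A B R S : Polynomial ℂ)
    (hA : A = Polynomial.X ^ N)
    (hB : B = ∏ j ∈ Finset.Icc 1 N, (Polynomial.X - Polynomial.C ((a : ℂ) * w ^ j)))
    (hR : R = Polynomial.C (((a : ℂ) ^ (2 * N - 1))⁻¹) * Polynomial.X ^ (N - 1))
    (hS : S = -Polynomial.C (((a : ℂ) ^ (2 * N - 1))⁻¹) *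
      ∏ j ∈ Finset.Icc (N + 1) (2 * N - 1), (Polynomial.X - Polynomial.C ((a : ℂ) * w ^ j))) :
    (∀ z : ℂ, A.eval z * R.eval z + B.eval z * S.eval z = 1) ∧
    bezoutDelta A B = a ^ N ∧
    polyNorm R = (a ^ (2 * N - 1))⁻¹ ∧
    (a ^ (2 * N - 1))⁻¹ = bezoutDelta A B ^ ((-2 : ℝ) + 1 / (N : ℝ)) :=
  optimality_example_general N hN a ha0 w hw A B R S hA hB hR hS
end
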